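/- arXiv:math/0406006 — 7 statements merged into one kernel-verified Lean document; each statement's English description precedes it below -/
import Mathlib

section
/- Let R be a commutative ring and let (r_j)_{j≥1} and (s_j)_{j≥1} be sequences in R. Define the persistent-root polynomial sequences q_n(x) = ∏_{j=1}^{n}(x − r_j) and p_n(x) = ∏_{j=1}^{n}(x − s_j) (with p_0 = q_0 = 1), and let L_{n,k} ∈ R be the (unique) connection coefficients with p_n(x) = Σ_{k=0}^{n} L_{n,k} q_k(x) (setting L_{n,k} = 0 for k < 0 or k > n). Then for all n, k ≥ 0: L_{n+1,k} = L_{n,k−1} + (r_{k+1} − s_{n+1}) L_{n,k}. -/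
/-!
Multiplying `p_n = Σ_k L_{n,k} q_k` by `x - s_{n+1}` and using
`q_k · (x - s_{n+1}) = q_{k+1} + (r_{k+1} - s_{n+1}) q_k` expresses `p_{n+1}` in the basis
`(q_k)` with coefficients `L_{n,k-1} + (r_{k+1} - s_{n+1}) L_{n,k}`. Since the `q_k` are monic
of degree `k`, such an expansion is unique (compare coefficients from the top degree down),
so these coefficients are the `L_{n+1,k}`.
-/

open Polynomial Finset

section MonicBasis

variable {R : Type*} [CommRing R]

theorem coeff_sum_range_C_mul_of_natDegree_eq (q : ℕ → R[X])
    (hdeg : ∀ k, (q k).natDegree = k) (a : ℕ → R) (m : ℕ) :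
    (∑ k ∈ range m, C (a k) * q k).coeff m = 0 := by
  rw [finsetSum_coeff]
  refine sum_eq_zero fun k hk => ?_
  rw [coeff_C_mul, coeff_eq_zero_of_natDegree_lt (by rw [hdeg]; exact mem_range.mp hk), mul_zero]

theorem eq_of_sum_range_C_mul_monic_eq (q : ℕ → R[X]) (hmonic : ∀ k, (q k).Monic)
    (hdeg : ∀ k, (q k).natDegree = k) (a b : ℕ → R) (m : ℕ)
    (h : ∑ k ∈ range m, C (a k) * q k = ∑ k ∈ range m, C (b k) * q k) :
    ∀ k < m, a k = b k := by
  induction m with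
  | zero => intro k hk; omega
  | succ m ih =>
    rw [sum_range_succ, sum_range_succ] at h
    have hq : (q m).coeff m = 1 := by simpa only [hdeg] using (hmonic m).coeff_natDegree
    have htop : a m = b m := by
      simpa [coeff_sum_range_C_mul_of_natDegree_eq q hdeg, coeff_C_mul, hq] using
        congrArg (coeff · m) h
    rw [htop, add_left_inj] at h
    intro k hk
    rcases (Nat.lt_succ_iff_lt_or_eq.mp hk) with hk | rfl
    exacts [ih h k hk, htop]

end MonicBasis

noncomputable def persistentRootPoly {R : Type*} [CommRing R] (r : ℕ → R) (n : ℕ) : R[X] :=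
  ∏ j ∈ range n, (X - C (r (j + 1)))

namespace persistentRootPoly

variable {R : Type*} [CommRing R] (r : ℕ → R)

theorem succ (n : ℕ) :
    persistentRootPoly r (n + 1) = persistentRootPoly r n * (X - C (r (n + 1))) :=
  prod_range_succ _ n

theorem monic (n : ℕ) : (persistentRootPoly r n).Monic :=
  monic_prod_of_monic _ _ fun _ _ => monic_X_sub_C _

theorem natDegree [Nontrivial R] (n : ℕ) : (persistentRootPoly r n).natDegree = n := by
  rw [persistentRootPoly, natDegree_prod_of_monic _ _ fun _ _ => monic_X_sub_C _]
  simp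

theorem mul_X_sub_C (t : R) (n : ℕ) :
    persistentRootPoly r n * (X - C t) =
      persistentRootPoly r (n + 1) + C (r (n + 1) - t) * persistentRootPoly r n := by
  rw [succ, C_sub]
  ring

theorem sum_C_mul_mul_X_sub_C (c : ℤ → R) (t : R) (m : ℕ) (hlow : c (-1) = 0)
    (hhigh : c (m + 1) = 0) :
    (∑ k ∈ range (m + 1), C (c k) * persistentRootPoly r k) * (X - C t) =
      ∑ k ∈ range (m + 2),
        C (c ((k : ℤ) - 1) + (r (k + 1) - t) * c k) * persistentRootPoly r k := by
  have hshift : ∑ k ∈ range (m + 2), C (c ((k : ℤ) - 1)) * persistentRootPoly r k =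
      ∑ k ∈ range (m + 1), C (c k) * persistentRootPoly r (k + 1) := by
    rw [sum_range_succ']
    simp [hlow]
  have htrunc : ∑ k ∈ range (m + 2), C ((r (k + 1) - t) * c k) * persistentRootPoly r k =
      ∑ k ∈ range (m + 1), C ((r (k + 1) - t) * c k) * persistentRootPoly r k := by
    rw [sum_range_succ]
    simp [hhigh]
  simp only [C_add, add_mul, sum_add_distrib]
  rw [hshift, htrunc, sum_mul, ← sum_add_distrib]
  refine sum_congr rfl fun k _ => ?_
  rw [mul_assoc, mul_X_sub_C, C_mul]
  ring

end persistentRootPoly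

/-- recurrence for the generalized Lah numbers (connection
coefficients between two persistent-root polynomial sequences):
`L_{n+1,k} = L_{n,k-1} + (r_{k+1} - s_{n+1}) L_{n,k}`. -/
theorem generalized_lah_recurrence (R : Type*) [CommRing R]
    (r s : ℕ → R) (L : ℕ → ℤ → R)
    (hLzero : ∀ (n : ℕ) (k : ℤ), (k < 0 ∨ (n : ℤ) < k) → L n k = 0)
    (hLexp : ∀ n : ℕ,
      (∏ j ∈ Finset.range n, (X - C (s (j + 1)))) =
        ∑ k ∈ Finset.range (n + 1),
          C (L n (k : ℤ)) * ∏ j ∈ Finset.range k, (X - C (r (j + 1)))) :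
    ∀ n k : ℕ,
      L (n + 1) (k : ℤ) =
        L n ((k : ℤ) - 1) + (r (k + 1) - s (n + 1)) * L n (k : ℤ) := by
  intro n k
  nontriviality R
  by_cases hk : n + 1 < k
  · simp only [hLzero _ _ (.inr (by omega : ((n + 1 : ℕ) : ℤ) < k)),
      hLzero n _ (.inr (by omega : (n : ℤ) < k - 1)), hLzero n _ (.inr (by omega : (n : ℤ) < k)),
      mul_zero, add_zero]
  have hLexp' : ∀ m : ℕ, persistentRootPoly s m =
      ∑ k ∈ range (m + 1), C (L m k) * persistentRootPoly r k := hLexp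
  have hexp : ∑ k ∈ range (n + 2), C (L (n + 1) k) * persistentRootPoly r k =
      ∑ k ∈ range (n + 2),
        C (L n ((k : ℤ) - 1) + (r (k + 1) - s (n + 1)) * L n k) * persistentRootPoly r k := by
    rw [← persistentRootPoly.sum_C_mul_mul_X_sub_C r _ _ _ (hLzero n _ (.inl (by omega)))
      (hLzero n _ (.inr (by omega))), ← hLexp', ← hLexp', persistentRootPoly.succ]
  exact eq_of_sum_range_C_mul_monic_eq _ (persistentRootPoly.monic r)
    (persistentRootPoly.natDegree r) _ _ _ hexp k (by omega)
end

section
/- Let R be a commutative ring, (r_j)_{j≥1} and (s_j)_{j≥1} sequences in R, q_n(x) = ∏_{j=1}^{n}(x − r_j), p_n(x) = ∏_{j=1}^{n}(x − s_j), and L_{n,k} ∈ R the connection coefficients with p_n = Σ_{k=0}^{n} L_{n,k} q_k. Define the cumulative connection constants C_n = Σ_{k=0}^{n} L_{n,k}. Then for all n ≥ 0: C_{n+1} = (1 − s_{n+1}) C_n + Σ_{k=0}^{n} L_{n,k} r_{k+1}. -/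
/-!
Multiplying `p_n = Σ L_{n,k} q_k` by `X - s_{n+1}` and using
`(X - s_{n+1}) q_k = q_{k+1} + (r_{k+1} - s_{n+1}) q_k` expands `p_{n+1}` in the `q_k`. Since the
`q_k` are monic of degree `k`, such expansions are unique, which gives the triangular recurrence
`L_{n+1,k} = L_{n,k-1} + (r_{k+1} - s_{n+1}) L_{n,k}`; summing it over `k` gives the claim.
-/

open Polynomial Finset

namespace Polynomial

variable {R : Type*} [Ring R] {p : ℕ → R[X]}

theorem coeff_sum_range_succ_C_mul (hmonic : ∀ k, (p k).Monic)
    (hdeg : ∀ k, (p k).natDegree = k) (c : ℕ → R) (m : ℕ) :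
    (∑ k ∈ range (m + 1), C (c k) * p k).coeff m = c m := by
  have hlow : ∀ k ∈ range m, (C (c k) * p k).coeff m = 0 := fun k hk => by
    rw [coeff_C_mul, coeff_eq_zero_of_natDegree_lt (by simpa [hdeg] using hk), mul_zero]
  have hlead : (p m).coeff m = 1 := by simpa [hdeg] using (hmonic m).coeff_natDegree
  rw [sum_range_succ, coeff_add, finsetSum_coeff, sum_eq_zero hlow, zero_add, coeff_C_mul, hlead,
    mul_one]

theorem eq_of_sum_range_C_mul_eq (hmonic : ∀ k, (p k).Monic)
    (hdeg : ∀ k, (p k).natDegree = k) {c d : ℕ → R} {m : ℕ}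
    (h : ∑ k ∈ range m, C (c k) * p k = ∑ k ∈ range m, C (d k) * p k) :
    ∀ k < m, c k = d k := by
  induction m with
  | zero => simp
  | succ m ih =>
    have htop : c m = d m := by
      rw [← coeff_sum_range_succ_C_mul hmonic hdeg c, h, coeff_sum_range_succ_C_mul hmonic hdeg]
    rw [sum_range_succ, sum_range_succ, htop] at h
    intro k hk
    rcases Nat.lt_succ_iff_lt_or_eq.mp hk with hk | rfl
    · exact ih (add_right_cancel h) k hk
    · exact htop

end Polynomial

namespace Lagrange

variable {R : Type*} [CommRing R]

theorem X_sub_C_mul_nodal_range (v : ℕ → R) (a : R) (k : ℕ) :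
    (X - C a) * nodal (range k) v = nodal (range (k + 1)) v + C (v k - a) * nodal (range k) v := by
  rw [nodal, nodal, prod_range_succ, C_sub]
  ring

end Lagrange

theorem Finset.sum_range_succ_smul_int_pred {R M : Type*} [Semiring R] [AddCommMonoid M]
    [Module R M] {c : ℤ → R} (hc : c (-1) = 0) (f : ℕ → M) (m : ℕ) :
    ∑ k ∈ range (m + 1), c ((k : ℤ) - 1) • f k = ∑ k ∈ range m, c k • f (k + 1) := by
  simp [sum_range_succ', hc]

open Lagrange in
theorem connection_coeff_succ {R : Type*} [CommRing R] (r s : ℕ → R) (L : ℕ → ℤ → R)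
    (hLzero : ∀ (n : ℕ) (k : ℤ), (k < 0 ∨ (n : ℤ) < k) → L n k = 0)
    (hLexp : ∀ n : ℕ, nodal (range n) (fun j => s (j + 1)) =
      ∑ k ∈ range (n + 1), C (L n k) * nodal (range k) (fun j => r (j + 1)))
    {n k : ℕ} (hk : k ≤ n + 1) :
    L (n + 1) k = L n (k - 1) + L n k * (r (k + 1) - s (n + 1)) := by
  nontriviality R
  set q : ℕ → R[X] := fun k => nodal (range k) (fun j => r (j + 1))
  have hmonic : ∀ k, (q k).Monic := fun k => nodal_monic
  have hdeg : ∀ k, (q k).natDegree = k := fun k => by simp [q, natDegree_nodal]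
  refine eq_of_sum_range_C_mul_eq hmonic hdeg (c := fun k => L (n + 1) k)
    (d := fun k => L n (k - 1) + L n k * (r (k + 1) - s (n + 1))) ?_ k (Nat.lt_succ_of_le hk)
  have hLtop : L n (n + 1 : ℕ) = 0 := hLzero n _ (.inr (by push_cast; omega))
  calc ∑ k ∈ range (n + 2), C (L (n + 1) k) * q k
      = (X - C (s (n + 1))) * ∑ k ∈ range (n + 1), C (L n k) * q k := by
        rw [← hLexp, ← hLexp, nodal, nodal, prod_range_succ, mul_comm]
    _ = ∑ k ∈ range (n + 1), (L n k • q (k + 1) + (L n k * (r (k + 1) - s (n + 1))) • q k) := by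
        simp only [mul_sum, smul_eq_C_mul, q, C_mul]
        refine sum_congr rfl fun k _ => ?_
        rw [mul_left_comm, X_sub_C_mul_nodal_range]
        ring
    _ = ∑ k ∈ range (n + 2), C (L n (k - 1) + L n k * (r (k + 1) - s (n + 1))) * q k := by
        simp only [C_add, add_mul, sum_add_distrib, ← smul_eq_C_mul]
        rw [sum_range_succ_smul_int_pred (hLzero n _ (.inl (by norm_num))),
          sum_range_succ _ (n + 1), hLtop, zero_mul, zero_smul, add_zero]

/-- recurrence for the cumulative connection constants
`C_n = Σ_{k=0}^n L_{n,k}`: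
`C_{n+1} = (1 - s_{n+1}) C_n + Σ_{k=0}^n L_{n,k} r_{k+1}`. -/
theorem ccc_recurrence (R : Type*) [CommRing R]
    (r s : ℕ → R) (L : ℕ → ℤ → R)
    (hLzero : ∀ (n : ℕ) (k : ℤ), (k < 0 ∨ (n : ℤ) < k) → L n k = 0)
    (hLexp : ∀ n : ℕ,
      (∏ j ∈ Finset.range n, (X - C (s (j + 1)))) =
        ∑ k ∈ Finset.range (n + 1),
          C (L n (k : ℤ)) * ∏ j ∈ Finset.range k, (X - C (r (j + 1)))) :
    ∀ n : ℕ,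
      ∑ k ∈ Finset.range (n + 2), L (n + 1) (k : ℤ) =
        (1 - s (n + 1)) * ∑ k ∈ Finset.range (n + 1), L n (k : ℤ)
          + ∑ k ∈ Finset.range (n + 1), L n (k : ℤ) * r (k + 1) := by
  intro n
  have hLtop : L n (n + 1 : ℕ) = 0 := hLzero n _ (.inr (by push_cast; omega))
  calc ∑ k ∈ range (n + 2), L (n + 1) k
      = ∑ k ∈ range (n + 2), (L n (k - 1) • (1 : R) + L n k * (r (k + 1) - s (n + 1))) :=
        sum_congr rfl fun k hk => by
          rw [smul_eq_mul, mul_one, connection_coeff_succ r s L hLzero hLexp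
            (Nat.lt_succ_iff.mp (mem_range.mp hk))]
    _ = ∑ k ∈ range (n + 1), (L n k + L n k * (r (k + 1) - s (n + 1))) := by
        rw [sum_add_distrib, sum_range_succ_smul_int_pred (hLzero n _ (.inl (by norm_num))),
          sum_range_succ _ (n + 1), hLtop, zero_mul, add_zero, sum_add_distrib]
        simp
    _ = _ := by
        simp only [mul_sub, sum_add_distrib, sum_sub_distrib, ← sum_mul]
        ring
end

section
/- Define a sequence of integers (r_k)_{k≥1} by r_1 = 0, r_2 = 2, and r_k = 1 − (r_{k−1})^2 for k ≥ 3. Define integers L_{n,k} by L_{0,0} = 1, L_{n,k} = 0 for k < 0 or k > n, and L_{n+1,k} = L_{n,k−1} + r_{k+1} L_{n,k} for n, k ≥ 0. Then for every n ≥ 1, the cumulative connection constant C_n = Σ_{k=0}^{n} L_{n,k} equals the n-th Lucas number L_n. -/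
open Finset

/-!
Write `S n = ∑ₖ L n k` and `T n = ∑ₖ r (k + 1) L n k`. The recurrence for `L` gives
`S (n + 1) = S n + T n` and `T (n + 1) = ∑ₖ (r (k + 2) + r (k + 1) ^ 2) L n k`. The root
recurrence makes every coefficient `r (k + 2) + r (k + 1) ^ 2` equal to `1` except the one at
`k = 0`, and column `0` vanishes from row `1` on, so `T (n + 1) = S n` for `n ≥ 1`. Hence `S`
satisfies the Lucas recurrence, with `S 1 = 1` and `S 2 = 3`.
-/

namespace GeneralizedLah

variable {R : Type*} [CommRing R]

def weightedRowSum (L : ℕ → ℤ → R) (w : ℕ → R) (n : ℕ) : R :=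
  ∑ k ∈ range (n + 1), w k * L n k

theorem weightedRowSum_congr_of_eq_zero_at_zero {L : ℕ → ℤ → R} {n : ℕ} (hL : L n 0 = 0)
    {w w' : ℕ → R} (hw : ∀ k, 0 < k → w k = w' k) :
    weightedRowSum L w n = weightedRowSum L w' n := by
  simp only [weightedRowSum, sum_range_succ' _ n, Nat.cast_zero, hL, mul_zero,
    hw _ (Nat.succ_pos _)]

theorem weightedRowSum_zero {L : ℕ → ℤ → R} (hL00 : L 0 0 = 1) (w : ℕ → R) :
    weightedRowSum L w 0 = w 0 := by
  simp [weightedRowSum, hL00]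

variable (r : ℕ → R) (L : ℕ → ℤ → R)
  (hLzero : ∀ (n : ℕ) (k : ℤ), (k < 0 ∨ (n : ℤ) < k) → L n k = 0)
  (hLrec : ∀ n k : ℕ, L (n + 1) (k : ℤ) = L n ((k : ℤ) - 1) + r (k + 1) * L n (k : ℤ))
include hLzero hLrec

theorem weightedRowSum_succ (w : ℕ → R) (n : ℕ) :
    weightedRowSum L w (n + 1) =
      weightedRowSum L (fun k => w (k + 1) + w k * r (k + 1)) n := by
  have hbelow : L n ((0 : ℕ) - 1 : ℤ) = 0 := hLzero n _ (Or.inl (by norm_num))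
  have habove : L n ((n + 1 : ℕ) : ℤ) = 0 := hLzero n _ (Or.inr (by push_cast; omega))
  have hshift : ∑ k ∈ range (n + 2), w k * L n ((k : ℤ) - 1) =
      ∑ k ∈ range (n + 1), w (k + 1) * L n k := by
    rw [sum_range_succ', hbelow, mul_zero, add_zero]
    exact sum_congr rfl fun k _ => by push_cast; ring_nf
  have hdrop : ∑ k ∈ range (n + 2), w k * (r (k + 1) * L n k) =
      ∑ k ∈ range (n + 1), w k * r (k + 1) * L n k := by
    rw [sum_range_succ, habove, mul_zero, mul_zero, add_zero]
    exact sum_congr rfl fun k _ => by ring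
  simp only [weightedRowSum, hLrec, mul_add, sum_add_distrib, hshift, hdrop, add_mul]

theorem rowSum_succ (n : ℕ) :
    weightedRowSum L 1 (n + 1) =
      weightedRowSum L 1 n + weightedRowSum L (fun k => r (k + 1)) n := by
  rw [weightedRowSum_succ r L hLzero hLrec]
  simp only [weightedRowSum, Pi.one_apply, one_mul, add_mul, sum_add_distrib]

theorem entry_succ_zero (hr1 : r 1 = 0) (n : ℕ) : L (n + 1) 0 = 0 := by
  simpa [hr1, hLzero n (-1) (Or.inl (by norm_num))] using hLrec n 0

theorem rootSum_add_two (hr1 : r 1 = 0) (hrrec : ∀ k : ℕ, 3 ≤ k → r k = 1 - r (k - 1) ^ 2)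
    (n : ℕ) : weightedRowSum L (fun k => r (k + 1)) (n + 2) = weightedRowSum L 1 (n + 1) := by
  rw [weightedRowSum_succ r L hLzero hLrec]
  refine weightedRowSum_congr_of_eq_zero_at_zero (entry_succ_zero r L hLzero hLrec hr1 n) ?_
  intro k hk
  simp only [hrrec (k + 1 + 1) (by omega), Nat.add_sub_cancel, Pi.one_apply]
  ring

theorem rowSum_add_three (hr1 : r 1 = 0) (hrrec : ∀ k : ℕ, 3 ≤ k → r k = 1 - r (k - 1) ^ 2)
    (n : ℕ) :
    weightedRowSum L 1 (n + 3) = weightedRowSum L 1 (n + 2) + weightedRowSum L 1 (n + 1) := by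
  rw [rowSum_succ r L hLzero hLrec, rootSum_add_two r L hLzero hLrec hr1 hrrec]

end GeneralizedLah

open GeneralizedLah in
/-- for the root sequence `r_1 = 0`, `r_2 = 2`,
`r_k = 1 - r_{k-1}^2` (k ≥ 3) and `[s] = [0]`, the cumulative connection
constants `C_n = Σ_{k=0}^n L_{n,k}` of the associated generalized Lah array
are the Lucas numbers. -/
theorem ccc_lucas
    (r : ℕ → ℤ) (hr1 : r 1 = 0) (hr2 : r 2 = 2)
    (hrrec : ∀ k : ℕ, 3 ≤ k → r k = 1 - (r (k - 1)) ^ 2)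
    (L : ℕ → ℤ → ℤ) (hL00 : L 0 0 = 1)
    (hLzero : ∀ (n : ℕ) (k : ℤ), (k < 0 ∨ (n : ℤ) < k) → L n k = 0)
    (hLrec : ∀ n k : ℕ,
      L (n + 1) (k : ℤ) = L n ((k : ℤ) - 1) + r (k + 1) * L n (k : ℤ))
    (Luc : ℕ → ℤ) (hLuc1 : Luc 1 = 1) (hLuc2 : Luc 2 = 3)
    (hLucrec : ∀ n : ℕ, 2 ≤ n → Luc (n + 1) = Luc n + Luc (n - 1)) :
    ∀ n : ℕ, 1 ≤ n → ∑ k ∈ Finset.range (n + 1), L n (k : ℤ) = Luc n := by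
  have hS1 : weightedRowSum L 1 1 = 1 := by
    rw [rowSum_succ r L hLzero hLrec, weightedRowSum_zero hL00, weightedRowSum_zero hL00, hr1]
    rfl
  have hT1 : weightedRowSum L (fun k => r (k + 1)) 1 = 2 := by
    rw [weightedRowSum_succ r L hLzero hLrec, weightedRowSum_zero hL00, hr1, hr2]
    ring
  have hS2 : weightedRowSum L 1 2 = 3 := by
    rw [rowSum_succ r L hLzero hLrec, hS1, hT1]
    norm_num
  have hlucas : ∀ m, weightedRowSum L 1 (m + 1) = Luc (m + 1) := by
    refine Nat.twoStepInduction (by rw [hS1, hLuc1]) (by rw [hS2, hLuc2]) fun m h0 h1 => ?_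
    rw [rowSum_add_three r L hLzero hLrec hr1 hrrec, h0, h1, hLucrec (m + 2) (by omega)]
    rfl
  intro n hn
  obtain ⟨m, rfl⟩ : ∃ m, n = m + 1 := ⟨n - 1, by omega⟩
  simpa [weightedRowSum] using hlucas m
end

section
/- Let R be a commutative ring, q ∈ R, and let the Gaussian binomial coefficients binom(n,k)_q ∈ R be defined by binom(n,0)_q = 1, binom(0,k)_q = 0 for k > 0, and binom(n+1,k)_q = q^k · binom(n,k)_q + binom(n,k−1)_q. Then in the polynomial ring R[x], for every n ≥ 0: x^n = Σ_{k=0}^{n} binom(n,k)_q · Φ_k(x), where Φ_k(x) = ∏_{s=0}^{k−1}(x − q^s). -/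
open Polynomial Finset

/-!
Multiplication by `x` acts on the q-Gaussian polynomials by `x Φ_k = Φ_{k+1} + q^k Φ_k`.
Expanding `x^{n+1} = x · x^n` with this rule and regrouping the coefficients of each `Φ_k`
reproduces exactly the Pascal-type recurrence defining `binom(n+1,k)_q`, so the theorem follows
by induction on `n`.
-/

/-- The Gaussian (q-)binomial coefficients in a commutative ring, defined by
`binom(n,0)_q = 1`, `binom(0,k)_q = 0` for `k > 0`, and
`binom(n+1,k)_q = q^k binom(n,k)_q + binom(n,k-1)_q`. -/
def gaussBinom {R : Type*} [CommRing R] (q : R) : ℕ → ℕ → R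
  | _, 0 => 1
  | 0, _ + 1 => 0
  | n + 1, k + 1 => q ^ (k + 1) * gaussBinom q n (k + 1) + gaussBinom q n k

section QGaussian

variable {R : Type*} [CommRing R] (q : R)

theorem gaussBinom_zero_right (n : ℕ) : gaussBinom q n 0 = 1 := by
  cases n <;> rfl

theorem gaussBinom_succ_succ (n k : ℕ) :
    gaussBinom q (n + 1) (k + 1) = q ^ (k + 1) * gaussBinom q n (k + 1) + gaussBinom q n k :=
  rfl

theorem gaussBinom_eq_zero_of_lt : ∀ {n k : ℕ}, n < k → gaussBinom q n k = 0
  | 0, _ + 1, _ => rfl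
  | n + 1, k + 1, h => by
    rw [gaussBinom_succ_succ, gaussBinom_eq_zero_of_lt (by omega),
      gaussBinom_eq_zero_of_lt (by omega), mul_zero, add_zero]

theorem sum_range_gaussBinom_succ_smul {M : Type*} [AddCommGroup M] [Module R M]
    (n : ℕ) (f : ℕ → M) :
    ∑ k ∈ range (n + 2), gaussBinom q (n + 1) k • f k =
      ∑ k ∈ range (n + 1), gaussBinom q n k • (f (k + 1) + q ^ k • f k) := by
  set g : ℕ → M := fun k => (q ^ k * gaussBinom q n k) • f k with hg
  have hg_top : g (n + 1) = 0 := by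
    simp only [hg, gaussBinom_eq_zero_of_lt q (Nat.lt_succ_self n), mul_zero, zero_smul]
  have hg_shift : ∑ k ∈ range (n + 1), g k = ∑ k ∈ range (n + 1), g (k + 1) + f 0 := by
    rw [← add_zero (∑ k ∈ range (n + 1), g k), ← hg_top, ← sum_range_succ, sum_range_succ']
    simp only [hg, pow_zero, one_mul, gaussBinom_zero_right, one_smul]
  have hrhs : ∑ k ∈ range (n + 1), gaussBinom q n k • (f (k + 1) + q ^ k • f k) =
      ∑ k ∈ range (n + 1), gaussBinom q n k • f (k + 1) + ∑ k ∈ range (n + 1), g k := by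
    simp only [hg, smul_add, smul_smul, mul_comm, sum_add_distrib]
  rw [hrhs, hg_shift, sum_range_succ', gaussBinom_zero_right, one_smul]
  simp only [hg, gaussBinom_succ_succ, add_smul, mul_smul, sum_add_distrib]
  abel

/-- The q-Gaussian polynomial `Φ_k`. -/
noncomputable def gaussPoly (k : ℕ) : R[X] :=
  ∏ s ∈ range k, (X - C (q ^ s))

theorem X_mul_gaussPoly (k : ℕ) :
    X * gaussPoly q k = gaussPoly q (k + 1) + q ^ k • gaussPoly q k := by
  rw [gaussPoly, gaussPoly, prod_range_succ, smul_eq_C_mul, map_pow]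
  ring

end QGaussian

/-- `x^n = Σ_{k=0}^n binom(n,k)_q Φ_k(x)` where
`Φ_k(x) = ∏_{s=0}^{k-1}(x - q^s)` are the q-Gaussian polynomials. -/
theorem qGaussian_expansion (R : Type*) [CommRing R] (q : R) :
    ∀ n : ℕ,
      (X : R[X]) ^ n =
        ∑ k ∈ Finset.range (n + 1),
          C (gaussBinom q n k) * ∏ s ∈ Finset.range k, (X - C (q ^ s)) := by
  intro n
  simp only [C_mul']
  change _ = ∑ k ∈ range (n + 1), gaussBinom q n k • gaussPoly q k
  induction n with
  | zero => simp [gaussBinom_zero_right, gaussPoly]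
  | succ n ih =>
    calc (X : R[X]) ^ (n + 1)
        = ∑ k ∈ range (n + 1), gaussBinom q n k • (X * gaussPoly q k) := by
          rw [pow_succ', ih, mul_sum]
          simp only [mul_smul_comm]
      _ = ∑ k ∈ range (n + 1),
            gaussBinom q n k • (gaussPoly q (k + 1) + q ^ k • gaussPoly q k) := by
          simp only [X_mul_gaussPoly]
      _ = _ := (sum_range_gaussBinom_succ_smul q n (gaussPoly q)).symm
end

section
/- Let F_n denote the n-th Fibonacci number (F_0 = 0, F_1 = F_2 = 1) and define the F-factorial n_F! = F_1 · F_2 · ⋯ · F_n with 0_F! = 1. Then for all 0 ≤ k ≤ n, the product k_F! · (n−k)_F! divides n_F!, so the Fibonomial coefficient binom(n,k)_F = n_F!/(k_F! · (n−k)_F!) is a natural number. -/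
open Finset

/-- The F-factorial `n_F! = F_1 F_2 ⋯ F_n` (Fibonacci factorial), `0_F! = 1`. -/
def fibFac (n : ℕ) : ℕ := ∏ i ∈ Finset.range n, Nat.fib (i + 1)

/-!
Fibonomial analogue of Pascal's rule: by `Nat.fib_add`,
`F_{a+b+2} = F_a F_{b+1} + F_{a+1} F_{b+2}`, so `(a+b+2)_F!` is
`(a+b+1)_F! F_{b+1} · F_a + (a+b+1)_F! F_{a+1} · F_{b+2}`, and the two summands are
divisible by `(a+1)_F! (b+1)_F!` by induction applied to `(a+1, b)` and `(a, b+1)`.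
-/

@[simp]
lemma fibFac_zero : fibFac 0 = 1 := rfl

lemma fibFac_succ (n : ℕ) : fibFac (n + 1) = fibFac n * Nat.fib (n + 1) :=
  prod_range_succ _ _

lemma fibFac_mul_fibFac_dvd_fibFac_add : ∀ a b : ℕ, fibFac a * fibFac b ∣ fibFac (a + b)
  | 0, b => by simp
  | a + 1, 0 => by simp
  | a + 1, b + 1 => by
    have hleft : fibFac (a + 1) * fibFac (b + 1) ∣ fibFac (a + 1 + b) * Nat.fib (b + 1) := by
      rw [fibFac_succ b, ← mul_assoc]
      exact mul_dvd_mul_right (fibFac_mul_fibFac_dvd_fibFac_add (a + 1) b) _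
    have hright : fibFac (a + 1) * fibFac (b + 1) ∣ fibFac (a + (b + 1)) * Nat.fib (a + 1) := by
      rw [fibFac_succ a, mul_right_comm]
      exact mul_dvd_mul_right (fibFac_mul_fibFac_dvd_fibFac_add a (b + 1)) _
    have hsum : fibFac (a + 1 + (b + 1)) = fibFac (a + 1 + b) * Nat.fib (b + 1) * Nat.fib a
        + fibFac (a + (b + 1)) * Nat.fib (a + 1) * Nat.fib (b + 2) := by
      rw [show a + 1 + (b + 1) = a + (b + 1) + 1 by omega, fibFac_succ, Nat.fib_add,
        show a + 1 + b = a + (b + 1) by omega]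
      ring
    rw [hsum]
    exact dvd_add (dvd_mul_of_dvd_left hleft _) (dvd_mul_of_dvd_left hright _)

/-- `k_F! (n-k)_F!` divides `n_F!`, so the Fibonomial coefficient
`binom(n,k)_F = n_F!/(k_F!(n-k)_F!)` is a natural number. -/
theorem fibFac_mul_fibFac_dvd :
    ∀ n k : ℕ, k ≤ n → fibFac k * fibFac (n - k) ∣ fibFac n := by
  intro n k hk
  simpa [Nat.add_sub_cancel' hk] using fibFac_mul_fibFac_dvd_fibFac_add k (n - k)
end

section
/- Let F be any sequence of positive natural numbers indexed by n ≥ 1 (an F-cobweb admissible sequence, so that all F-nomial coefficients binom(n,k)_F = n_F!/(k_F!(n−k)_F!) are natural numbers). Let 0 ≤ k ≤ n and m = n − k. Then the set C_max⟨Φ_{k+1} → Φ_n⟩ of all maximal chains of the layer ⟨Φ_{k+1} → Φ_n⟩ (i.e. all tuples ⟨x_{k+1}, …, x_n⟩ with x_s ∈ Φ_s) admits a partition into exactly binom(n,k)_F mutually disjoint blocks, each of cardinality m_F! = F_1 · F_2 · ⋯ · F_m (i.e. each equipotent to C_max(P_m)). -/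
/-!
A maximal chain of the layer `⟨Φ_{k+1} → Φ_n⟩` picks one of the `F_t` elements of each level
`Φ_t`, so there are `F_{k+1} ⋯ F_n = n_F! / k_F!` of them. Admissibility says this number is
`binom(n,k)_F · m_F!`, and a finite set of size `a · b` splits into `a` blocks of size `b`: the
fibres of the first projection under a bijection with `Fin a × Fin b`.
-/

open Finset

/-- The F-factorial `n_F! = F_1 F_2 ⋯ F_n`, `0_F! = 1`. -/
def ffac (F : ℕ → ℕ) (n : ℕ) : ℕ := ∏ i ∈ Finset.range n, F (i + 1)

/-- The F-nomial coefficient `binom(n,k)_F = n_F!/(k_F!(n-k)_F!)`. -/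
def fnomial (F : ℕ → ℕ) (n k : ℕ) : ℕ :=
  ffac F n / (ffac F k * ffac F (n - k))

theorem exists_fin_partition_of_card_eq_mul {α : Type*} [Finite α] {a b : ℕ}
    (h : Nat.card α = a * b) :
    ∃ B : Fin a → Set α, (∀ i j, i ≠ j → Disjoint (B i) (B j)) ∧
      (⋃ i, B i) = Set.univ ∧ ∀ i, Nat.card (B i) = b := by
  let e : α ≃ Fin a × Fin b := (Finite.equivFinOfCardEq h).trans finProdFinEquiv.symm
  refine ⟨fun i => {x | (e x).1 = i}, ?_, ?_, ?_⟩
  · exact fun i j hij => Set.disjoint_left.mpr fun x hi hj => hij (hi.symm.trans hj)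
  · exact Set.iUnion_eq_univ_iff.mpr fun x => ⟨(e x).1, rfl⟩
  · intro i
    let fiber : {x // (e x).1 = i} ≃ {j // j = i} × Fin b :=
      (e.subtypeEquiv fun _ => Iff.rfl).trans
        (Equiv.prodSubtypeFstEquivSubtypeProd (p := (· = i)))
    rw [Set.coe_ofPred, Nat.card_congr fiber, Nat.card_prod, Nat.card_unique, Nat.card_fin,
      one_mul]

def levelEquivFin (t N : ℕ) : {p : ℕ × ℕ // p.2 = t ∧ 1 ≤ p.1 ∧ p.1 ≤ N} ≃ Fin N where
  toFun p := ⟨p.1.1 - 1, by omega⟩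
  invFun j := ⟨(j + 1, t), rfl, by omega, j.isLt⟩
  left_inv := by
    rintro ⟨⟨s, t'⟩, rfl, hs, -⟩
    simp only [Subtype.mk.injEq, Prod.mk.injEq, and_true]
    omega
  right_inv j := by simp

theorem ffac_pos {F : ℕ → ℕ} (hF : ∀ n : ℕ, 1 ≤ n → 1 ≤ F n) (n : ℕ) : 0 < ffac F n :=
  Finset.prod_pos fun i _ => hF (i + 1) (Nat.le_add_left 1 i)

theorem ffac_add (F : ℕ → ℕ) (k m : ℕ) :
    ffac F (k + m) = ffac F k * ∏ i ∈ range m, F (k + 1 + i) := by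
  simp only [ffac, prod_range_add, add_right_comm k]

theorem fnomial_mul_ffac {F : ℕ → ℕ} {k m : ℕ} (hk : 0 < ffac F k)
    (hdvd : ffac F k * ffac F m ∣ ffac F (k + m)) :
    fnomial F (k + m) k * ffac F m = ∏ i ∈ range m, F (k + 1 + i) := by
  rw [fnomial, Nat.add_sub_cancel_left]
  refine Nat.eq_of_mul_eq_mul_left hk ?_
  calc ffac F k * (ffac F (k + m) / (ffac F k * ffac F m) * ffac F m)
      = ffac F (k + m) / (ffac F k * ffac F m) * (ffac F k * ffac F m) := by ring
    _ = ffac F k * ∏ i ∈ range m, F (k + 1 + i) := by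
      rw [Nat.div_mul_cancel hdvd, ffac_add]

abbrev LayerChain (F : ℕ → ℕ) (k m : ℕ) :=
  {c : Fin m → ℕ × ℕ // ∀ s : Fin m,
    (c s).2 = k + 1 + s.1 ∧ 1 ≤ (c s).1 ∧ (c s).1 ≤ F (k + 1 + s.1)}

def layerChainEquivPi (F : ℕ → ℕ) (k m : ℕ) :
    LayerChain F k m ≃ ((s : Fin m) → Fin (F (k + 1 + s.1))) :=
  Equiv.subtypePiEquivPi.trans (Equiv.piCongrRight fun _ => levelEquivFin _ _)

instance (F : ℕ → ℕ) (k m : ℕ) : Finite (LayerChain F k m) :=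
  .of_equiv _ (layerChainEquivPi F k m).symm

theorem card_layerChain (F : ℕ → ℕ) (k m : ℕ) :
    Nat.card (LayerChain F k m) = ∏ i ∈ range m, F (k + 1 + i) := by
  rw [Nat.card_congr (layerChainEquivPi F k m), Nat.card_pi]
  simp only [Nat.card_fin]
  exact Fin.prod_univ_eq_prod_range (fun i => F (k + 1 + i)) m

/-- Kwaśniewski's theorem: for an F-cobweb admissible sequence
`F`, the set of all maximal chains of the layer `⟨Φ_{k+1} → Φ_n⟩` of the
F-cobweb poset (tuples `⟨x_{k+1},…,x_n⟩` with `x_s ∈ Φ_s`) admits a partition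
into exactly `binom(n,k)_F` mutually disjoint blocks, each of cardinality
`m_F! = F_1 F_2 ⋯ F_m` where `m = n - k` (i.e. each equipotent to
`C_max(P_m)`). -/
theorem layer_maximal_chains_partition
    (F : ℕ → ℕ) (hF : ∀ n : ℕ, 1 ≤ n → 1 ≤ F n)
    (hadm : ∀ n k : ℕ, k ≤ n → ffac F k * ffac F (n - k) ∣ ffac F n)
    (n k m : ℕ) (hk : k ≤ n) (hm : m = n - k) :
    ∃ B : Fin (fnomial F n k) →
        Set {c : Fin m → ℕ × ℕ // ∀ s : Fin m,
          (c s).2 = k + 1 + s.1 ∧ 1 ≤ (c s).1 ∧ (c s).1 ≤ F (k + 1 + s.1)},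
      (∀ i j, i ≠ j → Disjoint (B i) (B j)) ∧
      (⋃ i, B i) = Set.univ ∧
      (∀ i, Nat.card (B i) = ffac F m) := by
  obtain ⟨j, rfl⟩ := Nat.exists_eq_add_of_le hk
  obtain rfl : m = j := hm.trans (Nat.add_sub_cancel_left ..)
  have hdvd : ffac F k * ffac F m ∣ ffac F (k + m) := by
    simpa using hadm (k + m) k (Nat.le_add_right k m)
  apply exists_fin_partition_of_card_eq_mul
  rw [card_layerChain, fnomial_mul_ffac (ffac_pos hF k) hdvd]
end

section
/- Let F be a sequence of positive natural numbers and consider the F-cobweb poset, which is a locally finite partial order. Its Möbius function μ satisfies, for x = ⟨s,t⟩ and y = ⟨u,v⟩ with x ≤ y: μ(x,y) = 1 if x = y, and μ(x,y) = (−1)^{v−t} · ∏_{i=t+1}^{v−1}(F_i − 1) if t < v. -/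
open Finset

/-!
For `x < y` the interval `[x, y]` consists of `x`, `y` and the complete levels `w` with
`t < w < v`, and level `w` has `F_w` elements. By strong induction on the level of `y`,
`μ(x, ·)` is constant on each level, so the defining recursion reads
`1 + Σ_{t<w<v} F_w μ_w + μ(x, y) = 0` with `μ_w` the value on level `w`. Its solution
`μ(x, y) = -∏_{t<i<v} (1 - F_i)` comes from the telescoping identity
`∏_{i∈s} (1 - a_i) = 1 - Σ_{w∈s} a_w ∏_{i∈s, i<w} (1 - a_i)`.
-/

/-- The elements of the F-cobweb poset: pairs `⟨s,t⟩` with `t ≥ 1` and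
`1 ≤ s ≤ F_t`. -/
def CobwebEl (F : ℕ → ℕ) : Type :=
  {p : ℕ × ℕ // 1 ≤ p.2 ∧ 1 ≤ p.1 ∧ p.1 ≤ F p.2}

/-- The F-cobweb partial order: `⟨s,t⟩ ≤ ⟨u,v⟩` iff `⟨s,t⟩ = ⟨u,v⟩` or `t < v`. -/
instance (F : ℕ → ℕ) : PartialOrder (CobwebEl F) where
  le x y := x = y ∨ x.1.2 < y.1.2
  le_refl x := Or.inl rfl
  le_trans x y z hxy hyz := by
    rcases hxy with rfl | h
    · exact hyz
    · rcases hyz with rfl | h' 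
      · exact Or.inr h
      · exact Or.inr (h.trans h')
  le_antisymm x y hxy hyx := by
    rcases hxy with rfl | h
    · rfl
    · rcases hyx with rfl | h'
      · rfl
      · exact absurd (h.trans h') (lt_irrefl _)

section Telescoping

variable {R : Type*} [CommRing R]

theorem neg_one_pow_mul_prod_Ico_sub_one (a : ℕ → R) {t v : ℕ} (h : t < v) :
    (-1) ^ (v - t) * ∏ i ∈ Ico (t + 1) v, (a i - 1) = -∏ i ∈ Ico (t + 1) v, (1 - a i) := by
  have hv : v - t = #(Ico (t + 1) v) + 1 := by rw [Nat.card_Ico]; omega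
  have hneg : ∏ i ∈ Ico (t + 1) v, (1 - a i) = ∏ i ∈ Ico (t + 1) v, -(a i - 1) :=
    Finset.prod_congr rfl fun _ _ => (neg_sub _ _).symm
  rw [hv, hneg, Finset.prod_neg]
  ring

theorem prod_Ico_one_sub_eq_one_sub_sum (a : ℕ → R) (t v : ℕ) :
    ∏ i ∈ Ico t v, (1 - a i) = 1 - ∑ w ∈ Ico t v, a w * ∏ i ∈ Ico t w, (1 - a i) := by
  rw [Finset.prod_one_sub_ordered]
  congr 1
  refine Finset.sum_congr rfl fun w hw => ?_
  congr 2
  ext i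
  simp only [Finset.mem_filter, Finset.mem_Ico] at hw ⊢
  omega

end Telescoping

namespace CobwebEl

variable {F : ℕ → ℕ}

def level (x : CobwebEl F) : ℕ := x.1.2

theorem le_iff {x y : CobwebEl F} : x ≤ y ↔ x = y ∨ x.level < y.level := Iff.rfl

theorem lt_iff {x y : CobwebEl F} : x < y ↔ x.level < y.level := by
  rw [lt_iff_le_and_ne, le_iff]
  exact ⟨fun ⟨h, hne⟩ => h.resolve_left hne,
    fun h => ⟨.inr h, by rintro rfl; exact lt_irrefl _ h⟩⟩

instance : DecidableEq (CobwebEl F) :=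
  inferInstanceAs (DecidableEq {p : ℕ × ℕ // 1 ≤ p.2 ∧ 1 ≤ p.1 ∧ p.1 ≤ F p.2})

theorem val_injective : Function.Injective (fun z : CobwebEl F => z.1) :=
  fun _ _ => Subtype.ext

variable (F) in
noncomputable def levelFinset (w : ℕ) : Finset (CobwebEl F) :=
  (Finset.Icc 1 (F w) ×ˢ {w}).preimage _ val_injective.injOn

@[simp]
theorem mem_levelFinset {w : ℕ} {z : CobwebEl F} : z ∈ levelFinset F w ↔ z.level = w := by
  simp only [levelFinset, Finset.mem_preimage, Finset.mem_product, Finset.mem_Icc,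
    Finset.mem_singleton, level, and_iff_right_iff_imp]
  rintro rfl
  exact z.2.2

theorem card_levelFinset {w : ℕ} (hw : 1 ≤ w) : #(levelFinset F w) = F w := by
  classical
  rw [levelFinset, Finset.card_preimage, Finset.filter_true_of_mem, Finset.card_product,
    Nat.card_Icc, Finset.card_singleton, Nat.add_sub_cancel, mul_one]
  simp only [Finset.mem_product, Finset.mem_Icc, Finset.mem_singleton]
  rintro ⟨s, t⟩ ⟨⟨hs, hsF⟩, rfl⟩
  exact ⟨⟨(s, t), hw, hs, hsF⟩, rfl⟩

theorem Icc_eq_insert_insert_biUnion {x y : CobwebEl F} (hxy : x < y) :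
    Set.Icc x y =
      ↑(insert x (insert y ((Ico (x.level + 1) y.level).biUnion (levelFinset F)))) := by
  ext z
  simp only [Set.mem_Icc, le_iff, Finset.coe_insert, Set.mem_insert_iff, Finset.coe_biUnion,
    Finset.coe_Ico, Set.mem_Ico, Set.mem_iUnion, Finset.mem_coe, mem_levelFinset, exists_prop]
  have := lt_iff.1 hxy
  constructor
  · rintro ⟨rfl | h1, rfl | h2⟩
    · exact .inl rfl
    · exact .inl rfl
    · exact .inr (.inl rfl)
    · exact .inr (.inr ⟨z.level, ⟨h1, h2⟩, rfl⟩)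
  · rintro (rfl | rfl | ⟨w, ⟨hw₁, hw₂⟩, hz⟩)
    · exact ⟨.inl rfl, .inr this⟩
    · exact ⟨.inr this, .inl rfl⟩
    · exact ⟨.inr (by omega), .inr (by omega)⟩

theorem finsum_mem_Icc {M : Type*} [AddCommMonoid M] (f : CobwebEl F → M) {x y : CobwebEl F}
    (hxy : x < y) :
    ∑ᶠ z ∈ Set.Icc x y, f z =
      f x + (f y + ∑ w ∈ Ico (x.level + 1) y.level, ∑ z ∈ levelFinset F w, f z) := by
  have hlt := lt_iff.1 hxy
  have hdisj : (↑(Ico (x.level + 1) y.level) : Set ℕ).PairwiseDisjoint (levelFinset F) := by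
    intro a _ b _ hab
    simp only [Function.onFun, Finset.disjoint_left, mem_levelFinset]
    rintro z rfl rfl
    exact hab rfl
  have hy : y ∉ (Ico (x.level + 1) y.level).biUnion (levelFinset F) := by
    simp
  have hx : x ∉ insert y ((Ico (x.level + 1) y.level).biUnion (levelFinset F)) := by
    simp only [Finset.mem_insert, Finset.mem_biUnion, Finset.mem_Ico, mem_levelFinset]
    rintro (h | ⟨w, hw, hx⟩)
    · exact hxy.ne h
    · omega
  rw [Icc_eq_insert_insert_biUnion hxy, finsum_mem_coe_finset, Finset.sum_insert hx,
    Finset.sum_insert hy, Finset.sum_biUnion hdisj]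

theorem eq_neg_prod_of_sum_Icc_eq_zero {R : Type*} [CommRing R] {m : CobwebEl F → R}
    {x : CobwebEl F} (hx : m x = 1) (hm : ∀ y, x < y → ∑ᶠ z ∈ Set.Icc x y, m z = 0)
    {y : CobwebEl F} (hxy : x < y) :
    m y = -∏ i ∈ Ico (x.level + 1) y.level, (1 - (F i : R)) := by
  induction hv : y.level using Nat.strong_induction_on generalizing y with
  | _ v ih =>
  have hlevel : ∀ w ∈ Ico (x.level + 1) v, ∑ z ∈ levelFinset F w, m z =
      -((F w : R) * ∏ i ∈ Ico (x.level + 1) w, (1 - (F i : R))) := by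
    intro w hw
    rw [Finset.mem_Ico] at hw
    have hconst :
        ∀ z ∈ levelFinset F w, m z = -∏ i ∈ Ico (x.level + 1) w, (1 - (F i : R)) :=
      fun z hz => ih w hw.2 (lt_iff.2 (by rw [mem_levelFinset.1 hz]; omega))
        (mem_levelFinset.1 hz)
    rw [Finset.sum_congr rfl hconst, Finset.sum_const, card_levelFinset (by omega),
      nsmul_eq_mul, mul_neg]
  have hsum := hm y hxy
  rw [finsum_mem_Icc _ hxy, hx, hv, Finset.sum_congr rfl hlevel, Finset.sum_neg_distrib] at hsum
  rw [prod_Ico_one_sub_eq_one_sub_sum]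
  linear_combination hsum

end CobwebEl

theorem cobweb_moebius_formula_general
    (F : ℕ → ℕ)
    (μ : CobwebEl F → CobwebEl F → ℤ)
    (hμ₁ : ∀ x : CobwebEl F, μ x x = 1)
    (hμ₂ : ∀ x y : CobwebEl F, x < y → ∑ᶠ z ∈ Set.Icc x y, μ x z = 0) :
    ∀ x y : CobwebEl F, x ≤ y →
      (x = y → μ x y = 1) ∧
      (x.1.2 < y.1.2 →
        μ x y = (-1) ^ (y.1.2 - x.1.2) *
          ∏ i ∈ Finset.Ico (x.1.2 + 1) y.1.2, ((F i : ℤ) - 1)) := by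
  intro x y _
  refine ⟨?_, fun hlt => ?_⟩
  · rintro rfl
    exact hμ₁ x
  · rw [neg_one_pow_mul_prod_Ico_sub_one _ hlt]
    exact CobwebEl.eq_neg_prod_of_sum_Icc_eq_zero (hμ₁ x) (hμ₂ x) (CobwebEl.lt_iff.2 hlt)

/-- the Möbius function of the F-cobweb poset (characterized by
`μ(x,x) = 1` and `Σ_{x ≤ z ≤ y} μ(x,z) = 0` for `x < y`) satisfies, for
`x = ⟨s,t⟩ ≤ y = ⟨u,v⟩`: `μ(x,y) = 1` if `x = y`, and
`μ(x,y) = (-1)^{v-t} ∏_{i=t+1}^{v-1} (F_i - 1)` if `t < v`. -/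
theorem cobweb_moebius_formula
    (F : ℕ → ℕ) (hF : ∀ n : ℕ, 1 ≤ n → 1 ≤ F n)
    (μ : CobwebEl F → CobwebEl F → ℤ)
    (hμ₁ : ∀ x : CobwebEl F, μ x x = 1)
    (hμ₂ : ∀ x y : CobwebEl F, x < y → ∑ᶠ z ∈ Set.Icc x y, μ x z = 0) :
    ∀ x y : CobwebEl F, x ≤ y →
      (x = y → μ x y = 1) ∧
      (x.1.2 < y.1.2 →
        μ x y = (-1) ^ (y.1.2 - x.1.2) *
          ∏ i ∈ Finset.Ico (x.1.2 + 1) y.1.2, ((F i : ℤ) - 1)) :=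
  cobweb_moebius_formula_general F μ hμ₁ hμ₂
end
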